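/- Let L be a bounded distributive lattice, f : Lⁿ → L a lattice polynomial function, and α : 2^{[n]} → L any mapping. Then α ∈ DNF(f) if and only if ⋁_{J ⊆ I} α(J) = f(e_I) for every I ⊆ {1,…,n}. -/

import Mathlib

open Classical

variable {L : Type*}

section Defs

variable [DistribLattice L] [BoundedOrder L]

/-- The ternary median term. -/
def med (x y z : L) : L := (x ⊔ y) ⊓ (x ⊔ z) ⊓ (y ⊔ z)

/-- Lattice polynomial functions of arity `n`: the smallest class of functions
`(Fin n → L) → L` containing projections and constants and closed under
pointwise binary meets and joins. -/
inductive IsLatticePolynomial {n : ℕ} : ((Fin n → L) → L) → Prop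
  | proj (k : Fin n) : IsLatticePolynomial fun x => x k
  | const (c : L) : IsLatticePolynomial fun _ => c
  | inf {f g : (Fin n → L) → L} :
      IsLatticePolynomial f → IsLatticePolynomial g →
      IsLatticePolynomial fun x => f x ⊓ g x
  | sup {f g : (Fin n → L) → L} :
      IsLatticePolynomial f → IsLatticePolynomial g →
      IsLatticePolynomial fun x => f x ⊔ g x

/-- Unary lattice polynomial functions: the smallest class of functions `L → L`
containing the identity and constants and closed under pointwise binary meets
and joins. -/
inductive IsUnaryLatticePolynomial : (L → L) → Prop
  | id : IsUnaryLatticePolynomial fun x : L => x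
  | const (c : L) : IsUnaryLatticePolynomial fun _ => c
  | inf {f g : L → L} :
      IsUnaryLatticePolynomial f → IsUnaryLatticePolynomial g →
      IsUnaryLatticePolynomial fun x => f x ⊓ g x
  | sup {f g : L → L} :
      IsUnaryLatticePolynomial f → IsUnaryLatticePolynomial g →
      IsUnaryLatticePolynomial fun x => f x ⊔ g x

/-- `h : L → L` preserves binary meets. -/
def PreservesInf (h : L → L) : Prop := ∀ x y : L, h (x ⊓ y) = h x ⊓ h y

/-- `h : L → L` preserves binary joins. -/
def PreservesSup (h : L → L) : Prop := ∀ x y : L, h (x ⊔ y) = h x ⊔ h y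

/-- Condition (H): `f(x ∧ c̄) = f(x) ∧ c` for all `c ∈ [f(0̄), f(1̄)]`. -/
def CondH {n : ℕ} (f : (Fin n → L) → L) : Prop :=
  ∀ (x : Fin n → L) (c : L), f (fun _ => ⊥) ≤ c → c ≤ f (fun _ => ⊤) →
    (f fun i => x i ⊓ c) = f x ⊓ c

/-- Condition (H*), the dual of (H): `f(x ∨ c̄) = f(x) ∨ c` for all `c ∈ [f(0̄), f(1̄)]`. -/
def CondHDual {n : ℕ} (f : (Fin n → L) → L) : Prop :=
  ∀ (x : Fin n → L) (c : L), f (fun _ => ⊥) ≤ c → c ≤ f (fun _ => ⊤) →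
    (f fun i => x i ⊔ c) = f x ⊔ c

/-- Condition (V): `f(x) = f(x ∧ c̄) ∨ f([x]_c)` for all `c ∈ [f(0̄), f(1̄)]`,
where the `i`-th component of `[x]_c` is `0` if `x i ≤ c`, and `x i` otherwise. -/
def CondV {n : ℕ} (f : (Fin n → L) → L) : Prop :=
  ∀ (x : Fin n → L) (c : L), f (fun _ => ⊥) ≤ c → c ≤ f (fun _ => ⊤) →
    f x = (f fun i => x i ⊓ c) ⊔ (f fun i => if x i ≤ c then ⊥ else x i)

/-- Condition (V*), the dual of (V): `f(x) = f(x ∨ c̄) ∧ f([x]^c)` for all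
`c ∈ [f(0̄), f(1̄)]`, where the `i`-th component of `[x]^c` is `1` if `c ≤ x i`,
and `x i` otherwise. -/
def CondVDual {n : ℕ} (f : (Fin n → L) → L) : Prop :=
  ∀ (x : Fin n → L) (c : L), f (fun _ => ⊥) ≤ c → c ≤ f (fun _ => ⊤) →
    f x = (f fun i => x i ⊔ c) ⊓ (f fun i => if c ≤ x i then ⊤ else x i)

/-- Condition (I): `f(c̄) = c` for all `c ∈ [f(0̄), f(1̄)]`. -/
def CondI {n : ℕ} (f : (Fin n → L) → L) : Prop :=
  ∀ c : L, f (fun _ => ⊥) ≤ c → c ≤ f (fun _ => ⊤) → f (fun _ => c) = c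

/-- A subset `S` of `L` is convex if `a ≤ b ≤ c` with `a, c ∈ S` implies `b ∈ S`. -/
def IsConvexSubset (S : Set L) : Prop :=
  ∀ ⦃a b c : L⦄, a ∈ S → c ∈ S → a ≤ b → b ≤ c → b ∈ S

/-- For every function `g = f_K^a` obtained from `f` by substituting constants for
variables (including `K = ∅`, i.e. `g = f`), the diagonal `δ_g` preserves binary meets.
Here `δ_{f_K^a}(x) = f(y)` where `y i = a i` for `i ∈ K` and `y i = x` otherwise. -/
def DiagSubstPreservesInf {n : ℕ} (f : (Fin n → L) → L) : Prop :=
  ∀ (K : Set (Fin n)) (a : Fin n → L) (x y : L),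
    (f fun i => if i ∈ K then a i else x ⊓ y) =
      (f fun i => if i ∈ K then a i else x) ⊓ (f fun i => if i ∈ K then a i else y)

/-- For every function `g = f_K^a` obtained from `f` by substituting constants for
variables (including `K = ∅`, i.e. `g = f`), the diagonal `δ_g` preserves binary joins. -/
def DiagSubstPreservesSup {n : ℕ} (f : (Fin n → L) → L) : Prop :=
  ∀ (K : Set (Fin n)) (a : Fin n → L) (x y : L),
    (f fun i => if i ∈ K then a i else x ⊔ y) =
      (f fun i => if i ∈ K then a i else x) ⊔ (f fun i => if i ∈ K then a i else y)

end Defs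


/-!
By induction, every lattice polynomial function is `dnf α` for some monotone `α`; for meets,
monotonicity collapses the product of two DNFs onto unions `I ∪ J`. Evaluating `dnf α` at `e_I`
gives `⋁_{J ⊆ I} α J`, and replacing `α` by this upward closure does not change `dnf α`. Hence `f`
is defined by `I ↦ f(e_I)`, and `α` defines `f` iff its upward closure is `I ↦ f(e_I)`.
-/

namespace LatticeDNF

variable {L ι : Type*} [DistribLattice L] [BoundedOrder L]

section CharVec

variable [DecidableEq ι]

def charVec (I : Finset ι) : ι → L := fun i => if i ∈ I then ⊤ else ⊥

theorem inf_charVec (I J : Finset ι) :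
    J.inf (charVec I : ι → L) = if J ⊆ I then ⊤ else ⊥ := by
  split_ifs with hJI
  · exact top_le_iff.mp (Finset.le_inf fun i hi => (if_pos (hJI hi)).ge)
  · obtain ⟨j, hjJ, hjI⟩ := Finset.not_subset.mp hJI
    exact le_bot_iff.mp ((Finset.inf_le hjJ).trans_eq (if_neg hjI))

end CharVec

variable [Fintype ι]

def dnf (α : Finset ι → L) (x : ι → L) : L := Finset.univ.sup fun I => α I ⊓ I.inf x

theorem dnf_powerset_sup (α : Finset ι → L) :
    dnf (fun I => I.powerset.sup α) = dnf α := by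
  funext x
  apply le_antisymm
  · refine Finset.sup_le fun I _ => ?_
    rw [Finset.sup_inf_distrib_right]
    refine Finset.sup_le fun J hJ => le_trans ?_ (Finset.le_sup (Finset.mem_univ J))
    exact inf_le_inf_left _ (Finset.inf_mono (Finset.mem_powerset.mp hJ))
  · refine Finset.sup_le fun I _ => le_trans ?_ (Finset.le_sup (Finset.mem_univ I))
    exact inf_le_inf_right _ (Finset.le_sup (Finset.mem_powerset_self I))

theorem dnf_const (c : L) : dnf (fun _ : Finset ι => c) = fun _ => c := by
  funext x
  refine le_antisymm (Finset.sup_le fun _ _ => inf_le_left) ?_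
  refine le_trans ?_ (Finset.le_sup (Finset.mem_univ ∅))
  rw [Finset.inf_empty, inf_top_eq]

theorem dnf_sup (α β : Finset ι → L) : dnf (α ⊔ β) = dnf α ⊔ dnf β := by
  funext x
  simp only [dnf, Pi.sup_apply, inf_sup_right]
  exact Finset.sup_sup

variable [DecidableEq ι]

theorem dnf_charVec (α : Finset ι → L) (I : Finset ι) :
    dnf α (charVec I) = I.powerset.sup α := by
  apply le_antisymm
  · refine Finset.sup_le fun J _ => ?_
    rw [inf_charVec]
    split_ifs with hJI
    · exact inf_le_left.trans (Finset.le_sup (f := α) (Finset.mem_powerset.mpr hJI))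
    · exact inf_le_right.trans bot_le
  · refine Finset.sup_le fun J hJ => le_trans ?_
      (Finset.le_sup (f := fun J => α J ⊓ J.inf (charVec I)) (Finset.mem_univ J))
    rw [inf_charVec, if_pos (Finset.mem_powerset.mp hJ), inf_top_eq]

theorem dnf_proj (k : ι) : dnf (fun I => (charVec I k : L)) = fun x => x k := by
  funext x
  apply le_antisymm
  · refine Finset.sup_le fun I _ => ?_
    by_cases hk : k ∈ I
    · exact inf_le_right.trans (Finset.inf_le hk)
    · simp [charVec, hk]
  · refine le_trans ?_ (Finset.le_sup (Finset.mem_univ {k}))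
    simp [charVec]

/-- Monotonicity lets the term indexed by `(I, J)` of the product be absorbed by the term
indexed by `I ∪ J`. -/
theorem dnf_inf {α β : Finset ι → L} (hα : Monotone α) (hβ : Monotone β) :
    dnf (α ⊓ β) = dnf α ⊓ dnf β := by
  funext x
  apply le_antisymm
  · exact Finset.sup_le fun I _ => le_inf
      ((inf_le_inf_right _ inf_le_left).trans
        (Finset.le_sup (f := fun I => α I ⊓ I.inf x) (Finset.mem_univ I)))
      ((inf_le_inf_right _ inf_le_right).trans
        (Finset.le_sup (f := fun I => β I ⊓ I.inf x) (Finset.mem_univ I)))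
  · rw [Pi.inf_apply, dnf, dnf, Finset.sup_inf_sup]
    refine Finset.sup_le fun ⟨I, J⟩ _ => le_trans ?_ (Finset.le_sup (Finset.mem_univ (I ∪ J)))
    rw [Finset.inf_union]
    exact le_inf
      (le_inf (inf_le_left.trans (inf_le_left.trans (hα Finset.subset_union_left)))
        (inf_le_right.trans (inf_le_left.trans (hβ Finset.subset_union_right))))
      (inf_le_inf inf_le_right inf_le_right)

end LatticeDNF

open LatticeDNF

section

variable [DistribLattice L] [BoundedOrder L]

theorem IsLatticePolynomial.exists_monotone_dnf {n : ℕ} {f : (Fin n → L) → L}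
    (hf : IsLatticePolynomial f) : ∃ α : Finset (Fin n) → L, Monotone α ∧ dnf α = f := by
  induction hf with
  | proj k =>
    refine ⟨_, fun I J hIJ => ?_, dnf_proj k⟩
    by_cases hk : k ∈ I
    · simp [charVec, hk, hIJ hk]
    · simp [charVec, hk]
  | const c => exact ⟨_, monotone_const, dnf_const c⟩
  | inf _ _ ihf ihg =>
    obtain ⟨α, hα, rfl⟩ := ihf
    obtain ⟨β, hβ, rfl⟩ := ihg
    exact ⟨α ⊓ β, hα.inf hβ, dnf_inf hα hβ⟩
  | sup _ _ ihf ihg =>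
    obtain ⟨α, hα, rfl⟩ := ihf
    obtain ⟨β, hβ, rfl⟩ := ihg
    exact ⟨α ⊔ β, hα.sup hβ, dnf_sup α β⟩

theorem IsLatticePolynomial.dnf_charVec {n : ℕ} {f : (Fin n → L) → L}
    (hf : IsLatticePolynomial f) : dnf (fun I => f (charVec I)) = f := by
  obtain ⟨α, -, rfl⟩ := hf.exists_monotone_dnf
  simp only [LatticeDNF.dnf_charVec, dnf_powerset_sup]

end

/-- For a lattice polynomial function `f` and a mapping
`α : 2^{[n]} → L`, `α ∈ DNF(f)` iff `⋁_{J ⊆ I} α(J) = f(e_I)` for every `I ⊆ [n]`. -/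
theorem mem_DNF_iff
    {L : Type*} [DistribLattice L] [BoundedOrder L] {n : ℕ}
    (f : (Fin n → L) → L) (hf : IsLatticePolynomial f)
    (α : Finset (Fin n) → L) :
    (∀ x : Fin n → L,
        f x = (Finset.univ : Finset (Finset (Fin n))).sup (fun I => α I ⊓ I.inf x)) ↔
      (∀ I : Finset (Fin n),
        I.powerset.sup α = f (fun i => if i ∈ I then (⊤ : L) else ⊥)) := by
  change (∀ x, f x = dnf α x) ↔ ∀ I, I.powerset.sup α = f (charVec I)
  constructor
  · intro hα I
    rw [hα, dnf_charVec]
  · intro hα x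
    rw [← hf.dnf_charVec, ← dnf_powerset_sup α]
    simp only [hα]
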